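/- arXiv:2510.23296 — 5 statements merged into one kernel-verified Lean document; each statement's English description precedes it below -/
import Mathlib

section
/- Let q, q_d ∈ ℝ³ be unit vectors, Ψ_q := 1 − q_dᵀq, e_q := q_d × q, and let ϱ ∈ (0,1) satisfy Ψ_q < ϱ². Then (1/2)‖e_q‖² ≤ Ψ_q < ‖e_q‖²/(2 − ϱ²). -/
open scoped RealInnerProductSpace

/-- Cross product on `ℝ³` viewed as a Euclidean space. -/
def cross3 (a b : EuclideanSpace ℝ (Fin 3)) : EuclideanSpace ℝ (Fin 3) :=
  WithLp.toLp 2 (crossProduct a b)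

/-! By Lagrange's identity, with `c = ⟪q_d, q⟫` one has `‖e_q‖² = (1 - c)(1 + c) = Ψ_q (2 - Ψ_q)`,
so the lower bound is `Ψ_q² ≥ 0`, and the upper bound, after multiplying by `2 - ϱ² > 0` and
cancelling `Ψ_q > 0`, is `Ψ_q < ϱ²`. -/

theorem norm_cross3_sq (a b : EuclideanSpace ℝ (Fin 3)) :
    ‖cross3 a b‖ ^ 2 = ‖a‖ ^ 2 * ‖b‖ ^ 2 - ⟪a, b⟫ ^ 2 := by
  simp only [← real_inner_self_eq_norm_sq, cross3, EuclideanSpace.inner_eq_star_dotProduct,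
    star_trivial, cross_dot_cross, dotProduct_comm]
  ring

theorem norm_cross3_sq_of_norm_eq_one {a b : EuclideanSpace ℝ (Fin 3)} (ha : ‖a‖ = 1)
    (hb : ‖b‖ = 1) : ‖cross3 a b‖ ^ 2 = (1 - ⟪a, b⟫) * (1 + ⟪a, b⟫) := by
  rw [norm_cross3_sq, ha, hb]
  ring

theorem one_sub_sq_div_two_le_one_sub (c : ℝ) : (1 - c) * (1 + c) / 2 ≤ 1 - c := by
  nlinarith [sq_nonneg (1 - c)]

theorem one_sub_lt_one_sub_sq_div {c r : ℝ} (hc : c < 1) (hcr : 1 - c < r) (hr : r < 2) :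
    1 - c < (1 - c) * (1 + c) / (2 - r) := by
  rw [lt_div_iff₀ (by linarith)]
  exact mul_lt_mul_of_pos_left (by linarith) (by linarith)

/-- For unit vectors `q, q_d` with `Ψ_q = 1 - ⟪q_d, q⟫` satisfying `0 < Ψ_q < ϱ²`
for some `ϱ ∈ (0,1)`, the direction error `e_q = q_d × q` satisfies
`(1/2)‖e_q‖² ≤ Ψ_q < ‖e_q‖²/(2 - ϱ²)`. -/
theorem direction_error_bounds (q qd : EuclideanSpace ℝ (Fin 3)) (ϱ : ℝ)
    (hq : ‖q‖ = 1) (hqd : ‖qd‖ = 1) (hϱ0 : 0 < ϱ) (hϱ1 : ϱ < 1)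
    (hΨpos : 0 < 1 - ⟪qd, q⟫) (hΨ : 1 - ⟪qd, q⟫ < ϱ ^ 2) :
    (1 / 2) * ‖cross3 qd q‖ ^ 2 ≤ 1 - ⟪qd, q⟫ ∧
      1 - ⟪qd, q⟫ < ‖cross3 qd q‖ ^ 2 / (2 - ϱ ^ 2) := by
  have hϱ_sq : ϱ ^ 2 < 2 := by nlinarith
  rw [norm_cross3_sq_of_norm_eq_one hqd hq]
  exact ⟨by linarith [one_sub_sq_div_two_le_one_sub ⟪qd, q⟫],
    one_sub_lt_one_sub_sq_div (by linarith) hΨ hϱ_sq⟩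
end

section
/- Let k_p, m > 0 and 0 < β < min{√(k_p/m), 4 k_p k_d/(4 m k_p + k_d²)} with k_d > 0. Then the matrix N = [[k_p/m, β],[β, 1]] is positive definite and the matrix W = [[β k_p/m, β k_d/(2m)],[β k_d/(2m), k_d/m − β]] is positive definite. -/
/-!
A symmetric `2 × 2` matrix with positive leading entry and positive determinant is positive
definite (complete the square). The two bounds on `β` are exactly these determinant conditions:
`det N = k_p/m - β²`, and `det W = β/(4m²) · (4 k_p k_d - β (4 m k_p + k_d²))`.
-/

namespace Matrix

lemma mul_dotProduct_mulVec_fin_two {R : Type*} [CommRing R] [StarRing R] [TrivialStar R]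
    (a b c : R) (x : Fin 2 → R) :
    a * (star x ⬝ᵥ !![a, b; b, c] *ᵥ x) =
      (a * x 0 + b * x 1) ^ 2 + (a * c - b ^ 2) * x 1 ^ 2 := by
  simp only [star_trivial, dotProduct, mulVec, Fin.sum_univ_two, of_apply, cons_val', cons_val_zero,
    cons_val_one, empty_val', cons_val_fin_one]
  ring

lemma posDef_fin_two_of_pos_of_det_pos {K : Type*} [Field K] [LinearOrder K]
    [IsStrictOrderedRing K] [StarRing K] [TrivialStar K] {a b c : K}
    (ha : 0 < a) (hdet : 0 < a * c - b ^ 2) :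
    (!![a, b; b, c] : Matrix (Fin 2) (Fin 2) K).PosDef := by
  refine posDef_iff_dotProduct_mulVec.2 ⟨?_, fun x hx => ?_⟩
  · exact isHermitian_iff_isSymm.2 <| IsSymm.ext fun i j => by fin_cases i <;> fin_cases j <;> rfl
  · refine pos_of_mul_pos_right ?_ ha.le
    rw [mul_dotProduct_mulVec_fin_two]
    by_cases hx1 : x 1 = 0
    · have hx0 : x 0 ≠ 0 := fun hx0 => hx (funext fun i => by fin_cases i <;> assumption)
      simp only [hx1, mul_zero, add_zero, ne_eq, OfNat.ofNat_ne_zero, not_false_eq_true,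
        zero_pow]
      positivity
    · positivity

end Matrix

theorem cable_length_lyapunov_matrices_posDef_general (kp kd m β : ℝ)
    (hkp : 0 < kp) (hm : 0 < m) (hβ0 : 0 < β)
    (hβ : β < min (Real.sqrt (kp / m)) (4 * kp * kd / (4 * m * kp + kd ^ 2))) :
    (!![kp / m, β; β, 1] : Matrix (Fin 2) (Fin 2) ℝ).PosDef ∧
      (!![β * kp / m, β * kd / (2 * m); β * kd / (2 * m), kd / m - β] :
        Matrix (Fin 2) (Fin 2) ℝ).PosDef := by
  obtain ⟨hβ_sqrt, hβ_gain⟩ := lt_min_iff.1 hβ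
  have hβ_sq : β ^ 2 < kp / m := (Real.lt_sqrt hβ0.le).1 hβ_sqrt
  have hβ_gain' : β * (4 * m * kp + kd ^ 2) < 4 * kp * kd :=
    (lt_div_iff₀ (by positivity)).1 hβ_gain
  have hdet_W : β * kp / m * (kd / m - β) - (β * kd / (2 * m)) ^ 2
      = β / (4 * m ^ 2) * (4 * kp * kd - β * (4 * m * kp + kd ^ 2)) := by
    field_simp
    ring
  refine ⟨Matrix.posDef_fin_two_of_pos_of_det_pos (by positivity) (by linarith), ?_⟩
  refine Matrix.posDef_fin_two_of_pos_of_det_pos (by positivity) ?_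
  rw [hdet_W]
  exact mul_pos (by positivity) (by linarith)

/-- For `k_p, k_d, m > 0` and `0 < β < min{√(k_p/m), 4 k_p k_d/(4 m k_p + k_d²)}`,
the matrices `N = [[k_p/m, β],[β, 1]]` and
`W = [[β k_p/m, β k_d/(2m)],[β k_d/(2m), k_d/m − β]]` are positive definite. -/
theorem cable_length_lyapunov_matrices_posDef (kp kd m β : ℝ)
    (hkp : 0 < kp) (hkd : 0 < kd) (hm : 0 < m) (hβ0 : 0 < β)
    (hβ : β < min (Real.sqrt (kp / m)) (4 * kp * kd / (4 * m * kp + kd ^ 2))) :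
    (!![kp / m, β; β, 1] : Matrix (Fin 2) (Fin 2) ℝ).PosDef ∧
      (!![β * kp / m, β * kd / (2 * m); β * kd / (2 * m), kd / m - β] :
        Matrix (Fin 2) (Fin 2) ℝ).PosDef :=
  cable_length_lyapunov_matrices_posDef_general kp kd m β hkp hm hβ0 hβ
end

section
/- Let k_q, k_ω, C_ω > 0 and 0 < β < min{√k_q, 4 k_q k_ω/(4 k_q + (k_ω + C_ω)²)}. Then the matrices N_{q1} = [[k_q, −β],[−β, 1]] and W_q = [[β k_q, −β(k_ω + C_ω)/2],[−β(k_ω + C_ω)/2, k_ω − β]] are both positive definite. -/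
/-! Both matrices are symmetric with positive upper-left entry, so by Sylvester's criterion it
suffices that their determinants are positive: `det N_q1 = k_q - β²` and
`det W_q = β/4 · (4 k_q k_ω - β (4 k_q + (k_ω + C_ω)²))`, which are exactly the two bounds on `β`. -/

theorem Matrix.posDef_fin_two_of_pos_of_det_pos_s8 {a b c : ℝ} (ha : 0 < a)
    (hdet : 0 < a * c - b * b) : (!![a, b; b, c] : Matrix (Fin 2) (Fin 2) ℝ).PosDef := by
  rw [Matrix.posDef_iff_dotProduct_mulVec]
  refine ⟨by simp [Matrix.IsHermitian, ← Matrix.ext_iff, Fin.forall_fin_two], fun v hv => ?_⟩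
  simp only [dotProduct, Pi.star_apply, star_trivial, cons_mulVec, Fin.sum_univ_two,
    cons_val_zero, cons_val_one, cons_val_fin_one, empty_mulVec]
  have hsq : a * (v 0 * (a * v 0 + b * v 1) + v 1 * (b * v 0 + c * v 1)) =
      (a * v 0 + b * v 1) ^ 2 + (a * c - b * b) * v 1 ^ 2 := by ring
  refine pos_of_mul_pos_right (hsq ▸ ?_) ha.le
  rcases eq_or_ne (v 1) 0 with h1 | h1
  · have h0 : v 0 ≠ 0 := fun h0 => hv (funext <| Fin.forall_fin_two.mpr ⟨h0, h1⟩)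
    simp only [h1, mul_zero, add_zero, ne_eq, OfNat.ofNat_ne_zero, not_false_eq_true, zero_pow]
    positivity
  · positivity

theorem cable_direction_lyapunov_matrices_posDef_general (kq kω Cω β : ℝ)
    (hkq : 0 < kq) (hβ0 : 0 < β)
    (hβ : β < min (Real.sqrt kq) (4 * kq * kω / (4 * kq + (kω + Cω) ^ 2))) :
    (!![kq, -β; -β, 1] : Matrix (Fin 2) (Fin 2) ℝ).PosDef ∧
      (!![β * kq, -(β * (kω + Cω)) / 2; -(β * (kω + Cω)) / 2, kω - β] :
        Matrix (Fin 2) (Fin 2) ℝ).PosDef := by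
  obtain ⟨hβ_sqrt, hβ_frac⟩ := lt_min_iff.mp hβ
  have hN_det : β ^ 2 < kq := (Real.lt_sqrt hβ0.le).mp hβ_sqrt
  have hW_det : β * (4 * kq + (kω + Cω) ^ 2) < 4 * kq * kω :=
    (lt_div_iff₀ (by positivity)).mp hβ_frac
  refine ⟨Matrix.posDef_fin_two_of_pos_of_det_pos_s8 hkq (by linear_combination hN_det),
    Matrix.posDef_fin_two_of_pos_of_det_pos_s8 (mul_pos hβ0 hkq) ?_⟩
  linear_combination (β / 4) * hW_det

/-- For `k_q, k_ω, C_ω > 0` and `0 < β < min{√k_q, 4 k_q k_ω/(4 k_q + (k_ω + C_ω)²)}`,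
the matrices `N_q1 = [[k_q, −β],[−β, 1]]` and
`W_q = [[β k_q, −β(k_ω + C_ω)/2],[−β(k_ω + C_ω)/2, k_ω − β]]` are positive definite. -/
theorem cable_direction_lyapunov_matrices_posDef (kq kω Cω β : ℝ)
    (hkq : 0 < kq) (hkω : 0 < kω) (hCω : 0 < Cω) (hβ0 : 0 < β)
    (hβ : β < min (Real.sqrt kq) (4 * kq * kω / (4 * kq + (kω + Cω) ^ 2))) :
    (!![kq, -β; -β, 1] : Matrix (Fin 2) (Fin 2) ℝ).PosDef ∧
      (!![β * kq, -(β * (kω + Cω)) / 2; -(β * (kω + Cω)) / 2, kω - β] :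
        Matrix (Fin 2) (Fin 2) ℝ).PosDef :=
  cable_direction_lyapunov_matrices_posDef_general kq kω Cω β hkq hβ0 hβ
end

section
/- Let q, q_d : ℝ → S² be differentiable curves of unit vectors, ω with ωᵀq = 0 and q̇ = ω × q, ω_d := q_d × q̇_d, e_q := q_d × q, and e_ω := ω + (q̂)²ω_d where (q̂)²v = q(qᵀv) − v. Then the time derivative of e_q satisfies ė_q = (qᵀq_d)e_ω − (qᵀω_d)(qᵀq_d)q + e_ω × e_q + (ω_d − (q̂)²ω_d) × e_q. -/
open scoped RealInnerProductSpace

lemma cross3_zero (a b : EuclideanSpace ℝ (Fin 3)) :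
    cross3 a b 0 = a 1 * b 2 - a 2 * b 1 := rfl
lemma cross3_one (a b : EuclideanSpace ℝ (Fin 3)) :
    cross3 a b 1 = a 2 * b 0 - a 0 * b 2 := rfl
lemma cross3_two (a b : EuclideanSpace ℝ (Fin 3)) :
    cross3 a b 2 = a 0 * b 1 - a 1 * b 0 := rfl

lemma hasDerivAt_coord {h : ℝ → EuclideanSpace ℝ (Fin 3)} {h' : EuclideanSpace ℝ (Fin 3)}
    {t : ℝ} (hh : HasDerivAt h h' t) (i : Fin 3) :
    HasDerivAt (fun s => h s i) (h' i) t := by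
  exact (EuclideanSpace.proj i).hasFDerivAt.comp_hasDerivAt t hh

lemma hasDerivAt_euclidean {h : ℝ → EuclideanSpace ℝ (Fin 3)} {h' : EuclideanSpace ℝ (Fin 3)}
    {t : ℝ} (hh : ∀ i, HasDerivAt (fun s => h s i) (h' i) t) :
    HasDerivAt h h' t := by
  have h1 : HasDerivAt (fun s => (fun i => h s i : Fin 3 → ℝ)) (fun i => h' i) t :=
    hasDerivAt_pi.2 hh
  exact ((EuclideanSpace.equiv (Fin 3) ℝ).symm.toContinuousLinearMap).hasFDerivAt.comp_hasDerivAt t h1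

lemma hasDerivAt_cross3 {f g : ℝ → EuclideanSpace ℝ (Fin 3)}
    {f' g' : EuclideanSpace ℝ (Fin 3)} {t : ℝ}
    (hf : HasDerivAt f f' t) (hg : HasDerivAt g g' t) :
    HasDerivAt (fun s => cross3 (f s) (g s)) (cross3 f' (g t) + cross3 (f t) g') t := by
  refine hasDerivAt_euclidean fun i => ?_
  have hf0 := hasDerivAt_coord hf 0; have hf1 := hasDerivAt_coord hf 1
  have hf2 := hasDerivAt_coord hf 2
  have hg0 := hasDerivAt_coord hg 0; have hg1 := hasDerivAt_coord hg 1
  have hg2 := hasDerivAt_coord hg 2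
  fin_cases i
  · show HasDerivAt (fun s => cross3 (f s) (g s) 0) ((cross3 f' (g t) + cross3 (f t) g') 0) t
    simp only [cross3_zero, PiLp.add_apply]
    exact ((hf1.mul hg2).sub (hf2.mul hg1)).congr_deriv (by ring)
  · show HasDerivAt (fun s => cross3 (f s) (g s) 1) ((cross3 f' (g t) + cross3 (f t) g') 1) t
    simp only [cross3_one, PiLp.add_apply]
    exact ((hf2.mul hg0).sub (hf0.mul hg2)).congr_deriv (by ring)
  · show HasDerivAt (fun s => cross3 (f s) (g s) 2) ((cross3 f' (g t) + cross3 (f t) g') 2) t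
    simp only [cross3_two, PiLp.add_apply]
    exact ((hf0.mul hg1).sub (hf1.mul hg0)).congr_deriv (by ring)

lemma inner3 (x y : EuclideanSpace ℝ (Fin 3)) :
    ⟪x, y⟫ = x 0 * y 0 + x 1 * y 1 + x 2 * y 2 := by
  simp [PiLp.inner_apply, RCLike.inner_apply, Fin.sum_univ_three]
  ring


/-- With `q̇ = ω × q`, `q̇_d = ω_d × q_d`, `e_q = q_d × q`, and
`e_ω = ω + (q̂)²ω_d` (where `(q̂)²v = (qᵀv)q - v`), the direction error satisfies
`ė_q = (qᵀq_d)e_ω − (qᵀω_d)(qᵀq_d)q + e_ω × e_q + (ω_d − (q̂)²ω_d) × e_q`. -/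
theorem direction_error_derivative
    (q qd ω ωd : ℝ → EuclideanSpace ℝ (Fin 3))
    (hq : ∀ t, ‖q t‖ = 1) (hqd : ∀ t, ‖qd t‖ = 1)
    (hωq : ∀ t, ⟪ω t, q t⟫ = 0) (hωdqd : ∀ t, ⟪ωd t, qd t⟫ = 0)
    (hq' : ∀ t, HasDerivAt q (cross3 (ω t) (q t)) t)
    (hqd' : ∀ t, HasDerivAt qd (cross3 (ωd t) (qd t)) t)
    (e_q e_ω : ℝ → EuclideanSpace ℝ (Fin 3))
    (he_q : ∀ t, e_q t = cross3 (qd t) (q t))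
    (he_ω : ∀ t, e_ω t = ω t + (⟪q t, ωd t⟫ • q t - ωd t)) :
    ∀ t, HasDerivAt e_q
      (⟪q t, qd t⟫ • e_ω t - (⟪q t, ωd t⟫ * ⟪q t, qd t⟫) • q t +
        cross3 (e_ω t) (e_q t) +
        cross3 (ωd t - (⟪q t, ωd t⟫ • q t - ωd t)) (e_q t)) t := by
  intro t
  have hfun : e_q = fun s => cross3 (qd s) (q s) := funext he_q
  have hD : HasDerivAt e_q
      (cross3 (cross3 (ωd t) (qd t)) (q t) + cross3 (qd t) (cross3 (ω t) (q t))) t := by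
    rw [hfun]; exact hasDerivAt_cross3 (hqd' t) (hq' t)
  convert hD using 1
  have Hωq := hωq t
  have Hωdqd := hωdqd t
  rw [inner3] at Hωq Hωdqd
  rw [he_q t, he_ω t]
  ext i
  have hi : i = 0 ∨ i = 1 ∨ i = 2 := by omega
  rcases hi with rfl | rfl | rfl
  · simp only [inner3, PiLp.add_apply, PiLp.sub_apply, PiLp.smul_apply, smul_eq_mul,
      cross3_zero, cross3_one, cross3_two]
    linear_combination (qd t 0) * Hωq - (q t 0) * Hωdqd
  · simp only [inner3, PiLp.add_apply, PiLp.sub_apply, PiLp.smul_apply, smul_eq_mul,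
      cross3_zero, cross3_one, cross3_two]
    linear_combination (qd t 1) * Hωq - (q t 1) * Hωdqd
  · simp only [inner3, PiLp.add_apply, PiLp.sub_apply, PiLp.smul_apply, smul_eq_mul,
      cross3_zero, cross3_one, cross3_two]
    linear_combination (qd t 2) * Hωq - (q t 2) * Hωdqd
end

section
/- With the notation of the cable-direction error dynamics (q, q_d unit vectors, ωᵀq = 0, ω_dᵀq_d = 0, e_q = q_d × q, e_ω = ω + (q̂)²ω_d, and ė_q = (qᵀq_d)e_ω + ((2I − qqᵀ)ω_d) × e_q + e_ω × e_q − (qᵀω_d)(qᵀq_d)q), the inner product satisfies ė_qᵀe_ω ≤ ‖e_ω‖² + C_ω‖e_q‖‖e_ω‖, where C_ω := ‖(2I − qqᵀ)ω_d‖. -/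
/-!
Since `‖q‖ = 1` and `ωᵀq = 0`, the vector `e_ω` is orthogonal to `q`, so the `q`-term of `ė_q`
drops out of `ė_qᵀe_ω`, and so does `e_ω × e_q`. What remains is `(qᵀq_d)‖e_ω‖²`, bounded by
`‖e_ω‖²` because `qᵀq_d ≤ ‖q‖‖q_d‖ = 1`, and `((2I − qqᵀ)ω_d × e_q)ᵀe_ω`, bounded by Cauchy–Schwarz
together with `‖a × b‖ ≤ ‖a‖‖b‖` (Lagrange's identity).
-/

open scoped RealInnerProductSpace

theorem inner_inner_smul_sub_eq_zero_of_norm_eq_one {E : Type*} [NormedAddCommGroup E]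
    [InnerProductSpace ℝ E] {q : E} (hq : ‖q‖ = 1) (v : E) : ⟪q, ⟪q, v⟫ • q - v⟫ = 0 := by
  rw [inner_sub_right, real_inner_smul_right, real_inner_self_eq_norm_sq, hq, one_pow, mul_one,
    sub_self]

theorem inner_cross3_self_left (a b : EuclideanSpace ℝ (Fin 3)) : ⟪cross3 a b, a⟫ = 0 := by
  simp only [cross3, EuclideanSpace.inner_eq_star_dotProduct, star_trivial, dot_self_cross]

theorem norm_cross3_le (a b : EuclideanSpace ℝ (Fin 3)) : ‖cross3 a b‖ ≤ ‖a‖ * ‖b‖ := by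
  refine le_of_sq_le_sq ?_ (by positivity)
  rw [mul_pow, norm_cross3_sq]
  exact sub_le_self _ (sq_nonneg _)

theorem inner_cross3_le (a b c : EuclideanSpace ℝ (Fin 3)) :
    ⟪cross3 a b, c⟫ ≤ ‖a‖ * ‖b‖ * ‖c‖ :=
  (real_inner_le_norm _ _).trans
    (mul_le_mul_of_nonneg_right (norm_cross3_le a b) (norm_nonneg c))

theorem direction_error_derivative_inner_bound_general
    (q qd ω ωd : EuclideanSpace ℝ (Fin 3))
    (hq : ‖q‖ = 1) (hqd : ‖qd‖ = 1)
    (hωq : ⟪ω, q⟫ = 0)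
    (e_q e_ω de_q : EuclideanSpace ℝ (Fin 3))
    (he_ω : e_ω = ω + (⟪q, ωd⟫ • q - ωd))
    (hde_q : de_q = ⟪q, qd⟫ • e_ω +
      cross3 ((2 : ℝ) • ωd - ⟪q, ωd⟫ • q) e_q + cross3 e_ω e_q -
      (⟪q, ωd⟫ * ⟪q, qd⟫) • q) :
    ⟪de_q, e_ω⟫ ≤ ‖e_ω‖ ^ 2 + ‖(2 : ℝ) • ωd - ⟪q, ωd⟫ • q‖ * ‖e_q‖ * ‖e_ω‖ := by
  set v := (2 : ℝ) • ωd - ⟪q, ωd⟫ • q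
  have hq_eω : ⟪q, e_ω⟫ = 0 := by
    rw [he_ω, inner_add_right, inner_inner_smul_sub_eq_zero_of_norm_eq_one hq, real_inner_comm,
      hωq, add_zero]
  have hq_qd : ⟪q, qd⟫ ≤ 1 := (real_inner_le_norm q qd).trans_eq (by rw [hq, hqd, one_mul])
  calc ⟪de_q, e_ω⟫ = ⟪q, qd⟫ * ‖e_ω‖ ^ 2 + ⟪cross3 v e_q, e_ω⟫ := by
        rw [hde_q, inner_sub_left, inner_add_left, inner_add_left, real_inner_smul_left,
          real_inner_smul_left, inner_cross3_self_left, real_inner_self_eq_norm_sq, hq_eω]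
        ring
    _ ≤ 1 * ‖e_ω‖ ^ 2 + ‖v‖ * ‖e_q‖ * ‖e_ω‖ :=
        add_le_add (mul_le_mul_of_nonneg_right hq_qd (sq_nonneg _)) (inner_cross3_le _ _ _)
    _ = ‖e_ω‖ ^ 2 + ‖v‖ * ‖e_q‖ * ‖e_ω‖ := by rw [one_mul]

/-- With `e_q = q_d × q`, `e_ω = ω + (q̂)²ω_d`, and
`ė_q = (qᵀq_d)e_ω + ((2I − qqᵀ)ω_d) × e_q + e_ω × e_q − (qᵀω_d)(qᵀq_d)q`,
one has `ė_qᵀe_ω ≤ ‖e_ω‖² + C_ω‖e_q‖‖e_ω‖` where `C_ω = ‖(2I − qqᵀ)ω_d‖`. -/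
theorem direction_error_derivative_inner_bound
    (q qd ω ωd : EuclideanSpace ℝ (Fin 3))
    (hq : ‖q‖ = 1) (hqd : ‖qd‖ = 1)
    (hωq : ⟪ω, q⟫ = 0) (hωdqd : ⟪ωd, qd⟫ = 0)
    (e_q e_ω de_q : EuclideanSpace ℝ (Fin 3))
    (he_q : e_q = cross3 qd q)
    (he_ω : e_ω = ω + (⟪q, ωd⟫ • q - ωd))
    (hde_q : de_q = ⟪q, qd⟫ • e_ω +
      cross3 ((2 : ℝ) • ωd - ⟪q, ωd⟫ • q) e_q + cross3 e_ω e_q -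
      (⟪q, ωd⟫ * ⟪q, qd⟫) • q) :
    ⟪de_q, e_ω⟫ ≤ ‖e_ω‖ ^ 2 + ‖(2 : ℝ) • ωd - ⟪q, ωd⟫ • q‖ * ‖e_q‖ * ‖e_ω‖ :=
  direction_error_derivative_inner_bound_general q qd ω ωd hq hqd hωq e_q e_ω de_q he_ω hde_q
end
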